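/- arXiv:2508.11332 — 3 statements merged into one kernel-verified Lean document; each statement's English description precedes it below -/
import Mathlib

section
/- Soundness of the scheduling-matched Hankel combination (sufficiency direction of the LPV fundamental lemma, window form): let (w̆, p̆) on {1,…,Nd} locally satisfy the kernel equations, let L satisfy nr < L ≤ Nd, let p̃ : {1,…,L} → ℝ^{np}, and let g ∈ ℝ^{Nd−L+1} be such that (H_L(w̆^{p̆}) − P̃·H_L(w̆)) g = 0, where P̃ = blkdiag(p̃(1) ⊗ I_{nw}, …, p̃(L) ⊗ I_{nw}). Define w : {1,…,L} → ℝ^{nw} by vec(w) = H_L(w̆)·g. Then (w, p̃) locally satisfies the kernel equations. -/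
open Matrix

noncomputable section

/-- Quotient part of the block decomposition of an index in `Fin (L * n)`. -/
def finDivL {L n : ℕ} (a : Fin (L * n)) : Fin L :=
  ⟨a.val / n, Nat.div_lt_of_lt_mul (Nat.lt_of_lt_of_eq a.isLt (Nat.mul_comm L n))⟩

/-- Remainder part of the block decomposition of an index in `Fin (L * n)`. -/
def finModR {L n : ℕ} (a : Fin (L * n)) : Fin n :=
  ⟨a.val % n, Nat.mod_lt _ (by
    rcases Nat.eq_zero_or_pos n with h | h
    · subst h; exact absurd a.isLt (by omega)
    · exact h)⟩

/-- Vectorization `vec(s)` of a finite sequence `s : {1,…,L} → ℝ^n`,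
stacking `s(1), …, s(L)`. -/
def vecSeq {L n : ℕ} (s : Fin L → Fin n → ℝ) : Fin (L * n) → ℝ :=
  fun a => s (finDivL a) (finModR a)

/-- The depth-`L` Hankel matrix `H_L(s)` of a finite sequence `s : {1,…,N} → ℝ^n`:
its `(t,j)`-th `n`-dimensional block is `s(j+t-1)`. -/
def hankelMat {n N : ℕ} (L : ℕ) (hL : L ≤ N) (s : Fin N → Fin n → ℝ) :
    Matrix (Fin (L * n)) (Fin (N - L + 1)) ℝ :=
  Matrix.of fun a j =>
    s ⟨j.val + (finDivL a).val, by
        have h1 := (finDivL a).isLt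
        have h2 := j.isLt
        omega⟩ (finModR a)

/-- The sequence `w^p : k ↦ p(k) ⊗ w(k)` (Kronecker product of vectors). -/
def kronSeq {L np nw : ℕ} (p : Fin L → Fin np → ℝ) (w : Fin L → Fin nw → ℝ) :
    Fin L → Fin (np * nw) → ℝ :=
  fun k c => p k (finDivL c) * w k (finModR c)

/-- The block-diagonal matrix `P̃ = blkdiag(p(1) ⊗ I_nw, …, p(L) ⊗ I_nw)`. -/
def ptilde {L np nw : ℕ} (p : Fin L → Fin np → ℝ) :
    Matrix (Fin (L * (np * nw))) (Fin (L * nw)) ℝ :=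
  Matrix.of fun a b =>
    if finDivL a = finDivL b ∧ finModR (finModR a) = finModR b then
      p (finDivL a) (finDivL (finModR a))
    else 0

/-- Finite sequences `(w, p)` on `{1,…,L}` locally satisfy the kernel equations of the
LPV shifted-affine representation with coefficient matrices `r0 i = r_{i,0}`,
`rp i j = r_{i,j}` (for `1 ≤ j ≤ np`):
`Σ_{i=0}^{nr} (r_{i,0} + Σ_{j=1}^{np} p_j(k+i) • r_{i,j}) w(k+i) = 0` for `1 ≤ k ≤ L - nr`. -/
def locSat (nw np nr ng : ℕ)
    (r0 : Fin (nr + 1) → Matrix (Fin ng) (Fin nw) ℝ)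
    (rp : Fin (nr + 1) → Fin np → Matrix (Fin ng) (Fin nw) ℝ)
    {L : ℕ} (w : Fin L → Fin nw → ℝ) (p : Fin L → Fin np → ℝ) : Prop :=
  ∀ (k : ℕ) (hk : k + nr < L),
    ∑ i : Fin (nr + 1),
      (r0 i + ∑ j : Fin np, p ⟨k + i.val, by omega⟩ j • rp i j) *ᵥ
        w ⟨k + i.val, by omega⟩ = 0


def finPair {L n : ℕ} (t : Fin L) (m : Fin n) : Fin (L * n) :=
  ⟨t.val * n + m.val, by
    have h1 : (t.val + 1) * n ≤ L * n := Nat.mul_le_mul_right n t.isLt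
    have h2 := m.isLt
    nlinarith⟩

lemma finPair_div {L n : ℕ} (t : Fin L) (m : Fin n) : finDivL (finPair t m) = t := by
  have hn : 0 < n := lt_of_le_of_lt (Nat.zero_le _) m.isLt
  apply Fin.ext
  show (t.val * n + m.val) / n = t.val
  rw [Nat.mul_comm, Nat.mul_add_div hn, Nat.div_eq_of_lt m.isLt, Nat.add_zero]

lemma finPair_mod {L n : ℕ} (t : Fin L) (m : Fin n) : finModR (finPair t m) = m := by
  apply Fin.ext
  show (t.val * n + m.val) % n = m.val
  rw [Nat.mul_comm, Nat.mul_add_mod, Nat.mod_eq_of_lt m.isLt]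

lemma finPair_eta {L n : ℕ} (a : Fin (L * n)) : finPair (finDivL a) (finModR a) = a := by
  apply Fin.ext
  show a.val / n * n + a.val % n = a.val
  rw [Nat.mul_comm, Nat.div_add_mod]


/-- soundness of the scheduling-matched Hankel combination (sufficiency
direction of the LPV fundamental lemma, window form). -/
theorem hankel_combination_sound
    (nw np nr ng : ℕ) (hnw : 1 ≤ nw) (hnp : 1 ≤ np) (hng : 1 ≤ ng)
    (r0 : Fin (nr + 1) → Matrix (Fin ng) (Fin nw) ℝ)
    (rp : Fin (nr + 1) → Fin np → Matrix (Fin ng) (Fin nw) ℝ)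
    (Nd L : ℕ) (hnrL : nr < L) (hL : L ≤ Nd)
    (wD : Fin Nd → Fin nw → ℝ) (pD : Fin Nd → Fin np → ℝ)
    (hdata : locSat nw np nr ng r0 rp wD pD)
    (pt : Fin L → Fin np → ℝ)
    (g : Fin (Nd - L + 1) → ℝ)
    (hg : (hankelMat L hL (kronSeq pD wD) - ptilde pt * hankelMat L hL wD) *ᵥ g = 0)
    (w : Fin L → Fin nw → ℝ)
    (hw : vecSeq w = hankelMat L hL wD *ᵥ g) :
    locSat nw np nr ng r0 rp w pt := by
  have key1 : ∀ (t : Fin L) (m : Fin nw), w t m =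
      ∑ j : Fin (Nd - L + 1), wD ⟨j.val + t.val, by have := j.isLt; have := t.isLt; omega⟩ m * g j := by
    intro t m
    have h := congrFun hw (finPair t m)
    simp only [vecSeq, Matrix.mulVec, dotProduct, hankelMat, Matrix.of_apply,
      finPair_div, finPair_mod] at h
    exact h
  -- key2
  have hA : hankelMat L hL (kronSeq pD wD) *ᵥ g = ptilde pt *ᵥ vecSeq w := by
    rw [Matrix.sub_mulVec, sub_eq_zero] at hg
    rw [hg, hw, Matrix.mulVec_mulVec]; rfl
  have key2 : ∀ (t : Fin L) (j' : Fin np) (m : Fin nw), pt t j' * w t m =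
      ∑ j : Fin (Nd - L + 1),
        pD ⟨j.val + t.val, by have := j.isLt; have := t.isLt; omega⟩ j' *
        wD ⟨j.val + t.val, by have := j.isLt; have := t.isLt; omega⟩ m * g j := by
    intro t j' m
    have h := congrFun hA (finPair t (finPair j' m))
    simp only [Matrix.mulVec, dotProduct, hankelMat, Matrix.of_apply, kronSeq,
      finPair_div, finPair_mod] at h
    rw [h, Finset.sum_eq_single (finPair t m)]
    · simp only [ptilde, Matrix.of_apply, vecSeq, finPair_div, finPair_mod, and_self, if_true]
    · intro b _ hb
      simp only [ptilde, Matrix.of_apply, finPair_div, finPair_mod, vecSeq]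
      rw [if_neg, zero_mul]
      intro ⟨h1, h2⟩
      exact hb (by rw [← finPair_eta b, h1, h2])
    · intro hb; exact absurd (Finset.mem_univ _) hb
  intro k hk
  have hvec : ∀ i : Fin (nr + 1),
      (r0 i + ∑ j' : Fin np, pt ⟨k + i.val, by omega⟩ j' • rp i j') *ᵥ w ⟨k + i.val, by omega⟩
      = ∑ j : Fin (Nd - L + 1), g j •
          ((r0 i + ∑ j' : Fin np, pD ⟨j.val + (k + i.val), by have := j.isLt; omega⟩ j' • rp i j') *ᵥ
            wD ⟨j.val + (k + i.val), by have := j.isLt; omega⟩) := by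
    intro i
    funext q
    have e1 := key1 ⟨k + i.val, by omega⟩
    have e2 := key2 ⟨k + i.val, by omega⟩
    simp only [Matrix.mulVec, dotProduct, Matrix.add_apply, Matrix.sum_apply,
      Matrix.smul_apply, smul_eq_mul, Pi.smul_apply, Finset.sum_apply]
    simp only [Fin.val_mk] at e1 e2 ⊢
    calc ∑ m : Fin nw, (r0 i q m + ∑ j' : Fin np, pt ⟨k + i.val, by omega⟩ j' * rp i j' q m) *
            w ⟨k + i.val, by omega⟩ m
        = ∑ m : Fin nw, (r0 i q m * w ⟨k + i.val, by omega⟩ m +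
            ∑ j' : Fin np, rp i j' q m * (pt ⟨k + i.val, by omega⟩ j' * w ⟨k + i.val, by omega⟩ m)) := by
          refine Finset.sum_congr rfl fun m _ => ?_
          rw [add_mul, Finset.sum_mul]
          congr 1
          exact Finset.sum_congr rfl fun j' _ => by ring
      _ = _ := by
          simp only [e2]
          simp only [e1]
          simp only [Finset.mul_sum, Finset.sum_mul, add_mul, mul_add, Finset.sum_add_distrib]
          congr 1
          · rw [Finset.sum_comm]
            exact Finset.sum_congr rfl fun j _ => Finset.sum_congr rfl fun m _ => by ring
          · rw [show ∀ f : Fin nw → Fin np → Fin (Nd - L + 1) → ℝ,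
                (∑ m, ∑ j', ∑ j, f m j' j) = ∑ m, ∑ j, ∑ j', f m j' j from
                fun f => Finset.sum_congr rfl fun m _ => Finset.sum_comm]
            rw [Finset.sum_comm]
            exact Finset.sum_congr rfl fun j _ => Finset.sum_congr rfl fun m _ =>
              Finset.sum_congr rfl fun j' _ => by ring
  calc ∑ i : Fin (nr + 1),
        (r0 i + ∑ j' : Fin np, pt ⟨k + i.val, by omega⟩ j' • rp i j') *ᵥ w ⟨k + i.val, by omega⟩
      = ∑ i : Fin (nr + 1), ∑ j : Fin (Nd - L + 1), g j •
          ((r0 i + ∑ j' : Fin np, pD ⟨j.val + (k + i.val), by have := j.isLt; omega⟩ j' • rp i j') *ᵥ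
            wD ⟨j.val + (k + i.val), by have := j.isLt; omega⟩) :=
        Finset.sum_congr rfl fun i _ => hvec i
    _ = ∑ j : Fin (Nd - L + 1), ∑ i : Fin (nr + 1), g j •
          ((r0 i + ∑ j' : Fin np, pD ⟨j.val + (k + i.val), by have := j.isLt; omega⟩ j' • rp i j') *ᵥ
            wD ⟨j.val + (k + i.val), by have := j.isLt; omega⟩) := Finset.sum_comm
    _ = 0 := by
        refine Finset.sum_eq_zero fun j _ => ?_
        rw [← Finset.smul_sum]
        have hd := hdata (j.val + k) (by have := j.isLt; omega)
        simp only [Nat.add_assoc] at hd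
        rw [hd, smul_zero]

end
end

section
/- Correctness of the LPV data-driven interpolation algorithm: let (w̆, p̆) on {1,…,Nd} locally satisfy the kernel equations, let nr < L ≤ Nd, let p̃ : {1,…,L} → ℝ^{np}, let ι : {1,…,K} → {1,…,L·nw} be injective with given values b ∈ ℝ^{K}, and set H := H_L(w̆) and N := H_L(w̆^{p̆}) − P̃·H_L(w̆) with P̃ = blkdiag(p̃(1) ⊗ I_{nw}, …, p̃(L) ⊗ I_{nw}). If g ∈ ℝ^{Nd−L+1} satisfies H|_ι g = b and N g = 0, then the sequence w̃ : {1,…,L} → ℝ^{nw} defined by vec(w̃) = H g satisfies (vec(w̃))_{ι(t)} = b_t for all t ∈ {1,…,K}, and (w̃, p̃) locally satisfies the kernel equations. -/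
open Matrix

noncomputable section

/-- Build an index of `Fin (L * n)` from block index and offset. -/
def mkIdx {L n : ℕ} (k : Fin L) (c : Fin n) : Fin (L * n) :=
  ⟨c.val + k.val * n, by
    calc c.val + k.val * n < n + k.val * n := by omega
    _ = (k.val + 1) * n := by ring
    _ ≤ L * n := Nat.mul_le_mul_right n k.isLt⟩

lemma finDivL_mkIdx {L n : ℕ} (k : Fin L) (c : Fin n) : finDivL (mkIdx k c) = k := by
  have hn : 0 < n := c.pos
  apply Fin.ext
  show (c.val + k.val * n) / n = k.val
  rw [Nat.add_mul_div_right _ _ hn, Nat.div_eq_of_lt c.isLt, Nat.zero_add]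

lemma finModR_mkIdx {L n : ℕ} (k : Fin L) (c : Fin n) : finModR (mkIdx k c) = c := by
  apply Fin.ext
  show (c.val + k.val * n) % n = c.val
  rw [Nat.add_mul_mod_self_right, Nat.mod_eq_of_lt c.isLt]

lemma mkIdx_div_mod {L n : ℕ} (a : Fin (L * n)) : mkIdx (finDivL a) (finModR a) = a := by
  apply Fin.ext
  show a.val % n + a.val / n * n = a.val
  exact Nat.mod_add_div' a.val n

lemma hankelMat_mkIdx {n N : ℕ} {L : ℕ} (hL : L ≤ N) (s : Fin N → Fin n → ℝ)
    (k : Fin L) (c : Fin n) (j : Fin (N - L + 1)) :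
    hankelMat L hL s (mkIdx k c) j
      = s ⟨j.val + k.val, by have := j.isLt; have := k.isLt; omega⟩ c := by
  unfold hankelMat
  simp only [Matrix.of_apply]
  congr 1
  · exact Fin.ext (by simp [finDivL_mkIdx])
  · exact finModR_mkIdx k c

lemma kronSeq_mkIdx {L np nw : ℕ} (p : Fin L → Fin np → ℝ) (w : Fin L → Fin nw → ℝ)
    (x : Fin L) (j : Fin np) (c : Fin nw) :
    kronSeq p w x (mkIdx j c) = p x j * w x c := by
  simp [kronSeq, finDivL_mkIdx, finModR_mkIdx]
def dIdx {Nd L nr : ℕ} (hL : L ≤ Nd) {k : ℕ} (hk : k + nr < L)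
    (l : Fin (Nd - L + 1)) (i : Fin (nr + 1)) : Fin Nd :=
  ⟨l.val + (k + i.val), by have := l.isLt; have := i.isLt; omega⟩

lemma sum_swap_helper {α β γ δ : Type*} [Fintype α] [Fintype β] [Fintype γ] [Fintype δ]
    (A : α → β → ℝ) (U : α → β → δ → ℝ) (B : α → γ → β → ℝ) (V : α → β → γ → δ → ℝ)
    (G : δ → ℝ) :
    ∑ i, ∑ c, (A i c * ∑ l, U i c l * G l + ∑ j, B i j c * ∑ l, V i c j l * G l)
      = ∑ l, G l * ∑ i, ∑ c, (A i c * U i c l + ∑ j, B i j c * V i c j l) := by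
  have e1 : ∀ i c, A i c * ∑ l, U i c l * G l = ∑ l, G l * (A i c * U i c l) := by
    intro i c
    rw [Finset.mul_sum]
    exact Finset.sum_congr rfl fun l _ => by ring
  have e2 : ∀ i c, ∑ j, B i j c * ∑ l, V i c j l * G l
      = ∑ l, G l * ∑ j, B i j c * V i c j l := by
    intro i c
    calc ∑ j, B i j c * ∑ l, V i c j l * G l
        = ∑ j, ∑ l, G l * (B i j c * V i c j l) := by
          refine Finset.sum_congr rfl fun j _ => ?_
          rw [Finset.mul_sum]
          exact Finset.sum_congr rfl fun l _ => by ring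
      _ = ∑ l, ∑ j, G l * (B i j c * V i c j l) := Finset.sum_comm
      _ = ∑ l, G l * ∑ j, B i j c * V i c j l := by
          exact Finset.sum_congr rfl fun l _ => (Finset.mul_sum _ _ _).symm
  calc ∑ i, ∑ c, (A i c * ∑ l, U i c l * G l + ∑ j, B i j c * ∑ l, V i c j l * G l)
      = ∑ i, ∑ c, ∑ l, (G l * (A i c * U i c l) + G l * ∑ j, B i j c * V i c j l) := by
        refine Finset.sum_congr rfl fun i _ => Finset.sum_congr rfl fun c _ => ?_
        rw [e1, e2, ← Finset.sum_add_distrib]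
    _ = ∑ i, ∑ l, ∑ c, (G l * (A i c * U i c l) + G l * ∑ j, B i j c * V i c j l) := by
        exact Finset.sum_congr rfl fun i _ => Finset.sum_comm
    _ = ∑ l, ∑ i, ∑ c, (G l * (A i c * U i c l) + G l * ∑ j, B i j c * V i c j l) :=
        Finset.sum_comm
    _ = ∑ l, G l * ∑ i, ∑ c, (A i c * U i c l + ∑ j, B i j c * V i c j l) := by
        refine Finset.sum_congr rfl fun l _ => ?_
        rw [Finset.mul_sum]
        refine Finset.sum_congr rfl fun i _ => ?_
        rw [Finset.mul_sum]
        exact Finset.sum_congr rfl fun c _ => by rw [mul_add]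

set_option maxHeartbeats 1000000 in
/-- correctness of the LPV data-driven interpolation algorithm. -/
theorem lpv_dd_interpolation_correct
    (nw np nr ng : ℕ) (hnw : 1 ≤ nw) (hnp : 1 ≤ np) (hng : 1 ≤ ng)
    (r0 : Fin (nr + 1) → Matrix (Fin ng) (Fin nw) ℝ)
    (rp : Fin (nr + 1) → Fin np → Matrix (Fin ng) (Fin nw) ℝ)
    (Nd L : ℕ) (hnrL : nr < L) (hL : L ≤ Nd)
    (wD : Fin Nd → Fin nw → ℝ) (pD : Fin Nd → Fin np → ℝ)
    (hdata : locSat nw np nr ng r0 rp wD pD)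
    (pt : Fin L → Fin np → ℝ)
    (K : ℕ) (ι : Fin K → Fin (L * nw)) (hι : Function.Injective ι)
    (b : Fin K → ℝ)
    (g : Fin (Nd - L + 1) → ℝ)
    (hgiven : (hankelMat L hL wD).submatrix ι id *ᵥ g = b)
    (hker : (hankelMat L hL (kronSeq pD wD) - ptilde pt * hankelMat L hL wD) *ᵥ g = 0)
    (wt : Fin L → Fin nw → ℝ)
    (hwt : vecSeq wt = hankelMat L hL wD *ᵥ g) :
    (∀ t : Fin K, vecSeq wt (ι t) = b t) ∧ locSat nw np nr ng r0 rp wt pt := by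
  have h1 : ∀ (x : Fin L) (c : Fin nw),
      wt x c = ∑ l : Fin (Nd - L + 1),
        wD ⟨l.val + x.val, by have := l.isLt; have := x.isLt; omega⟩ c * g l := by
    intro x c
    have h := congrFun hwt (mkIdx x c)
    simp only [vecSeq, finDivL_mkIdx, finModR_mkIdx] at h
    rw [h]
    simp only [mulVec, dotProduct]
    exact Finset.sum_congr rfl fun l _ => by rw [hankelMat_mkIdx]
  have h2 : ∀ (x : Fin L) (j : Fin np) (c : Fin nw),
      pt x j * wt x c = ∑ l : Fin (Nd - L + 1),
        pD ⟨l.val + x.val, by have := l.isLt; have := x.isLt; omega⟩ j *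
          wD ⟨l.val + x.val, by have := l.isLt; have := x.isLt; omega⟩ c * g l := by
    intro x j c
    have hk0 := congrFun hker (mkIdx x (mkIdx j c))
    rw [Matrix.sub_mulVec] at hk0
    simp only [Pi.sub_apply, Pi.zero_apply, sub_eq_zero] at hk0
    have hmm : ((ptilde pt * hankelMat L hL wD) *ᵥ g)
        = ptilde pt *ᵥ (hankelMat L hL wD *ᵥ g) := (Matrix.mulVec_mulVec _ _ _).symm
    rw [hmm, ← hwt] at hk0
    have hp : ∀ bb : Fin (L * nw),
        ptilde pt (mkIdx x (mkIdx j c)) bb = if bb = mkIdx x c then pt x j else 0 := by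
      intro bb
      unfold ptilde
      simp only [Matrix.of_apply, finDivL_mkIdx, finModR_mkIdx]
      by_cases hbb : bb = mkIdx x c
      · subst hbb
        simp [finDivL_mkIdx, finModR_mkIdx]
      · rw [if_neg hbb, if_neg]
        rintro ⟨hd, hm⟩
        exact hbb (by rw [← mkIdx_div_mod bb, ← hd, ← hm])
    have hr : (ptilde pt *ᵥ vecSeq wt) (mkIdx x (mkIdx j c)) = pt x j * wt x c := by
      simp only [mulVec, dotProduct]
      rw [Finset.sum_congr rfl fun bb _ => by rw [hp bb]]
      simp [ite_mul, Finset.sum_ite_eq', vecSeq, finDivL_mkIdx, finModR_mkIdx]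
    rw [hr] at hk0
    rw [← hk0]
    simp only [mulVec, dotProduct]
    exact Finset.sum_congr rfl fun l _ => by rw [hankelMat_mkIdx, kronSeq_mkIdx]
  constructor
  · intro t
    rw [hwt]
    exact congrFun hgiven t
  · intro k hk
    funext m
    simp only [Finset.sum_apply, Pi.zero_apply]
    have expand : ∀ (q : Fin np → ℝ) (v : Fin nw → ℝ) (i : Fin (nr + 1)),
        ((r0 i + ∑ j, q j • rp i j) *ᵥ v) m
          = ∑ c, (r0 i m c * v c + ∑ j, rp i j m c * (q j * v c)) := by
      intro q v i
      simp only [mulVec, dotProduct, Matrix.add_apply, Matrix.sum_apply, Matrix.smul_apply,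
        smul_eq_mul]
      refine Finset.sum_congr rfl fun c _ => ?_
      rw [add_mul, Finset.sum_mul]
      exact congrArg (_ + ·) (Finset.sum_congr rfl fun j _ => by ring)
    calc ∑ i : Fin (nr + 1),
          ((r0 i + ∑ j, pt ⟨k + i.val, by omega⟩ j • rp i j) *ᵥ wt ⟨k + i.val, by omega⟩) m
        = ∑ i : Fin (nr + 1), ∑ c, (r0 i m c * wt ⟨k + i.val, by omega⟩ c
            + ∑ j, rp i j m c * (pt ⟨k + i.val, by omega⟩ j * wt ⟨k + i.val, by omega⟩ c)) :=
          Finset.sum_congr rfl fun i _ => expand _ _ i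
      _ = ∑ i : Fin (nr + 1), ∑ c, (r0 i m c *
              ∑ l : Fin (Nd - L + 1), wD (dIdx hL hk l i) c * g l
            + ∑ j, rp i j m c *
              ∑ l : Fin (Nd - L + 1), pD (dIdx hL hk l i) j * wD (dIdx hL hk l i) c * g l) := by
          refine Finset.sum_congr rfl fun i _ => Finset.sum_congr rfl fun c _ => ?_
          refine congrArg₂ (· + ·) ?_ ?_
          · exact congrArg (r0 i m c * ·) (h1 ⟨k + i.val, by omega⟩ c)
          · exact Finset.sum_congr rfl fun j _ =>
              congrArg (rp i j m c * ·) (h2 ⟨k + i.val, by omega⟩ j c)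
      _ = ∑ l : Fin (Nd - L + 1), g l * ∑ i : Fin (nr + 1), ∑ c,
            (r0 i m c * wD (dIdx hL hk l i) c
              + ∑ j, rp i j m c * (pD (dIdx hL hk l i) j * wD (dIdx hL hk l i) c)) :=
          sum_swap_helper (fun i c => r0 i m c)
            (fun i c l => wD (dIdx hL hk l i) c)
            (fun i j c => rp i j m c)
            (fun i c j l => pD (dIdx hL hk l i) j * wD (dIdx hL hk l i) c) g
      _ = ∑ l : Fin (Nd - L + 1), g l * ∑ i : Fin (nr + 1),
            ((r0 i + ∑ j, pD (dIdx hL hk l i) j • rp i j) *ᵥ wD (dIdx hL hk l i)) m := by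
          refine Finset.sum_congr rfl fun l _ => congrArg (g l * ·) ?_
          exact (Finset.sum_congr rfl fun i _ => expand _ _ i).symm
      _ = ∑ l : Fin (Nd - L + 1), g l * 0 := by
          refine Finset.sum_congr rfl fun l _ => congrArg (g l * ·) ?_
          have hd := hdata (l.val + k) (by have := l.isLt; omega)
          have hdm := congrFun hd m
          simp only [Finset.sum_apply, Pi.zero_apply] at hdm
          simp only [Nat.add_assoc] at hdm
          exact hdm
      _ = 0 := by simp

end
end

section
/- Non-uniqueness when the rank condition fails: let H be a real (L·nw) × M matrix, N a real q × M matrix, 𝒩 a real M × s matrix whose column span equals ker(N), and ι : {1,…,K} → {1,…,L·nw} injective. Suppose rank(H|_ι 𝒩) < rank(H 𝒩) and there exists g₀ ∈ ℝ^{M} with N g₀ = 0 and H|_ι g₀ = b. Then there exist g₁, g₂ ∈ ℝ^{M} with N gᵢ = 0 and H|_ι gᵢ = b for i = 1, 2 but H g₁ ≠ H g₂; moreover, the set {H g : g ∈ ℝ^{M}, N g = 0, H|_ι g = b} is infinite. -/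
open Matrix

/-- non-uniqueness when the rank condition fails. Here `𝒩` (written `Nb`) is
a matrix whose column span equals `ker(N)`. If `rank(H|_ι 𝒩) < rank(H 𝒩)` and some
`g₀` solves the interpolation equations, then there are two solutions with different
interpolants, and the set of interpolants is infinite. -/
theorem interpolant_nonunique_of_rank_lt
    (L nw M q s K : ℕ)
    (H : Matrix (Fin (L * nw)) (Fin M) ℝ)
    (N : Matrix (Fin q) (Fin M) ℝ)
    (Nb : Matrix (Fin M) (Fin s) ℝ)
    (hNb : ∀ v : Fin M → ℝ, N *ᵥ v = 0 ↔ ∃ h : Fin s → ℝ, v = Nb *ᵥ h)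
    (ι : Fin K → Fin (L * nw)) (hι : Function.Injective ι)
    (b : Fin K → ℝ)
    (hrank : (H.submatrix ι id * Nb).rank < (H * Nb).rank)
    (g₀ : Fin M → ℝ) (hg₀N : N *ᵥ g₀ = 0) (hg₀b : H.submatrix ι id *ᵥ g₀ = b) :
    (∃ g₁ g₂ : Fin M → ℝ,
      (N *ᵥ g₁ = 0 ∧ H.submatrix ι id *ᵥ g₁ = b) ∧
      (N *ᵥ g₂ = 0 ∧ H.submatrix ι id *ᵥ g₂ = b) ∧
      H *ᵥ g₁ ≠ H *ᵥ g₂) ∧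
    {v : Fin (L * nw) → ℝ |
      ∃ g : Fin M → ℝ, N *ᵥ g = 0 ∧ H.submatrix ι id *ᵥ g = b ∧ v = H *ᵥ g}.Infinite := by
  set A := H.submatrix ι id with hA
  -- A * Nb is the row-submatrix of H * Nb
  have hsub : A * Nb = (H * Nb).submatrix ι id := by
    ext k j
    simp [hA, Matrix.mul_apply]
  -- kernel inclusion
  have hker : LinearMap.ker (H * Nb).mulVecLin ≤ LinearMap.ker (A * Nb).mulVecLin := by
    intro h hh
    simp only [LinearMap.mem_ker, Matrix.mulVecLin_apply] at hh ⊢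
    rw [hsub]
    ext k
    have := congrFun hh (ι k)
    simpa [Matrix.mulVec, dotProduct, Matrix.submatrix_apply] using this
  -- strict inclusion via rank-nullity
  have hrn1 := LinearMap.finrank_range_add_finrank_ker (A * Nb).mulVecLin
  have hrn2 := LinearMap.finrank_range_add_finrank_ker (H * Nb).mulVecLin
  have hkerlt : LinearMap.ker (H * Nb).mulVecLin < LinearMap.ker (A * Nb).mulVecLin := by
    refine lt_of_le_of_ne hker ?_
    intro heq
    rw [← heq] at hrn1
    have : (A * Nb).rank = (H * Nb).rank := by
      have := hrn1.trans hrn2.symm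
      exact Nat.add_right_cancel this
    omega
  obtain ⟨h, hh1, hh2⟩ := SetLike.exists_of_lt hkerlt
  simp only [LinearMap.mem_ker, Matrix.mulVecLin_apply] at hh1 hh2
  set x : Fin M → ℝ := Nb *ᵥ h with hx
  have hxN : N *ᵥ x = 0 := (hNb x).mpr ⟨h, rfl⟩
  have hxA : A *ᵥ x = 0 := by rw [hx, Matrix.mulVec_mulVec]; exact hh1
  have hxH : H *ᵥ x ≠ 0 := by rw [hx, Matrix.mulVec_mulVec]; exact hh2
  -- the family of solutions
  have hsol : ∀ t : ℝ, N *ᵥ (g₀ + t • x) = 0 ∧ A *ᵥ (g₀ + t • x) = b := by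
    intro t
    constructor
    · rw [Matrix.mulVec_add, Matrix.mulVec_smul, hg₀N, hxN]; simp
    · rw [Matrix.mulVec_add, Matrix.mulVec_smul, hxA]
      simpa using hg₀b
  have hHval : ∀ t : ℝ, H *ᵥ (g₀ + t • x) = H *ᵥ g₀ + t • (H *ᵥ x) := by
    intro t
    rw [Matrix.mulVec_add, Matrix.mulVec_smul]
  obtain ⟨j, hj⟩ : ∃ j, (H *ᵥ x) j ≠ 0 := by
    by_contra hc
    push_neg at hc
    exact hxH (funext hc)
  have hinj : Function.Injective (fun t : ℝ => H *ᵥ (g₀ + t • x)) := by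
    intro t₁ t₂ hteq
    simp only [hHval] at hteq
    have := congrFun hteq j
    simp only [Pi.add_apply, Pi.smul_apply, smul_eq_mul] at this
    have h2 : t₁ * (H *ᵥ x) j = t₂ * (H *ᵥ x) j := by linarith
    exact mul_right_cancel₀ hj h2
  constructor
  · refine ⟨g₀, g₀ + x, ⟨hg₀N, hg₀b⟩, ⟨by simpa using (hsol 1).1, by simpa using (hsol 1).2⟩, ?_⟩
    intro heq
    have h01 : (fun t : ℝ => H *ᵥ (g₀ + t • x)) 0 = (fun t : ℝ => H *ᵥ (g₀ + t • x)) 1 := by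
      simp only []
      rw [show g₀ + (0:ℝ) • x = g₀ by simp, show g₀ + (1:ℝ) • x = g₀ + x by simp]
      exact heq
    exact zero_ne_one (hinj h01)
  · apply Set.infinite_of_injective_forall_mem (f := fun t : ℝ => H *ᵥ (g₀ + t • x)) hinj
    intro t
    exact ⟨g₀ + t • x, (hsol t).1, (hsol t).2, rfl⟩
end
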